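/- Suppose ∫₀^∞ (1/a(x))·exp(−2B(x)) dx = ∞ and let Ω⁺(b,a) = sup_{x>0} ( ∫₀ˣ (1/a(y))·exp(−2B(y)) dy ) · ( ∫ₓ^∞ exp(2B(y)) dy ). If λ > 1/(2·Ω⁺(b,a)) (with the convention 1/∞ = 0), then there is no function u on (0,∞) with u > 0 on (0,∞), u continuous up to 0 with u(0) = 1, u differentiable, a·u′ differentiable, and (1/2)(a u′)′ + b u′ + λ u = 0 on (0,∞). -/

import Mathlib

open MeasureTheory Set Filter
open scoped ENNReal

/-- `B(x) = ∫₀ˣ (b/a)(y) dy`. -/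
noncomputable def Bfun (a b : ℝ → ℝ) (x : ℝ) : ℝ := ∫ y in (0:ℝ)..x, b y / a y

/-- `Ω⁺(b,a) = sup_{x>0} (∫₀ˣ (1/a) e^{-2B}) (∫ₓ^∞ e^{2B}) ∈ [0,∞]`. -/
noncomputable def OmegaPlus (a b : ℝ → ℝ) : ℝ≥0∞ :=
  ⨆ x ∈ Ioi (0:ℝ),
    ENNReal.ofReal (∫ y in (0:ℝ)..x, (a y)⁻¹ * Real.exp (-2 * Bfun a b y)) *
      ∫⁻ y in Ioi x, ENNReal.ofReal (Real.exp (2 * Bfun a b y))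

/-- `u` is a solution of `(1/2)(a u′)′ + b u′ + λ u = 0` on `(0,∞)` with `u > 0`
and `u(0) = 1`. -/
def IsPosSolution (a b : ℝ → ℝ) (lam : ℝ) (u : ℝ → ℝ) : Prop :=
  (∀ x ∈ Ioi (0:ℝ), 0 < u x) ∧
    ContinuousOn u (Ici 0) ∧ u 0 = 1 ∧
    (∀ x ∈ Ioi (0:ℝ), DifferentiableAt ℝ u x) ∧
    (∀ x ∈ Ioi (0:ℝ), DifferentiableAt ℝ (fun y => a y * deriv u y) x) ∧
    ∀ x ∈ Ioi (0:ℝ),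
      2⁻¹ * deriv (fun y => a y * deriv u y) x + b x * deriv u x + lam * u x = 0

/-!
With the scale function `s` (`s' = e^{-2B}/a`) and `v = u'/s' = a u' e^{2B}`, the equation reads
`v' = -2λ u e^{2B}`. As `λ > 0` and `u > 0`, `v` decreases; it cannot become negative, for then
`u ≤ u(r) + v(r) (s - s(r)) → -∞` since `s(∞) = ∞`. Hence `u` increases. Now fix `x₀ > 0`.
Integrating `v' ≤ -2λ u(x₀) e^{2B}` over `[x₀, ∞)` gives `2λ u(x₀) ∫_{x₀}^∞ e^{2B} ≤ v(x₀)`, and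
integrating `u' = v s' ≥ v(x₀) s'` over `[0, x₀]` gives `v(x₀) s(x₀) ≤ u(x₀) - 1`. Together
`2λ s(x₀) ∫_{x₀}^∞ e^{2B} < 1` for every `x₀`, i.e. `2λ Ω⁺ ≤ 1`.
-/

open Topology

section Primitive

variable {f : ℝ → ℝ} {c : ℝ}

theorem ContinuousOn.continuousOn_primitive_Ici (hf : ContinuousOn f (Ici c)) :
    ContinuousOn (fun x => ∫ y in c..x, f y) (Ici c) := by
  intro x hx
  have hcx : c ≤ x + 1 := by linarith [mem_Ici.1 hx]
  have hint : IntegrableOn f (uIcc c (x + 1)) := by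
    rw [uIcc_of_le hcx]
    exact (hf.mono Icc_subset_Ici_self).integrableOn_Icc
  have hmem : uIcc c (x + 1) ∈ 𝓝[Ici c] x := by
    rw [uIcc_of_le hcx, ← Ici_inter_Iic]
    exact inter_mem_nhdsWithin _ (Iic_mem_nhds (by linarith))
  exact (intervalIntegral.continuousOn_primitive_interval hint x
    (mem_of_mem_nhdsWithin hx hmem)).mono_of_mem_nhdsWithin hmem

theorem ContinuousOn.hasDerivAt_primitive_Ici (hf : ContinuousOn f (Ici c)) {x : ℝ}
    (hx : c < x) : HasDerivAt (fun t => ∫ y in c..t, f y) (f x) x :=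
  intervalIntegral.integral_hasDerivAt_right
    ((hf.mono (by rw [uIcc_of_le hx.le]; exact Icc_subset_Ici_self)).intervalIntegrable)
    ((hf.mono (Ioi_subset_Ici le_rfl)).stronglyMeasurableAtFilter isOpen_Ioi x hx)
    (hf.continuousAt (Ici_mem_nhds hx))

theorem ContinuousOn.tendsto_ofReal_intervalIntegral_Ici (hf : ContinuousOn f (Ici c))
    (hf0 : ∀ x ∈ Ici c, 0 ≤ f x) :
    Tendsto (fun x => ENNReal.ofReal (∫ y in c..x, f y)) atTop
      (𝓝 (∫⁻ y in Ioi c, ENNReal.ofReal (f y))) := by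
  have hmeas : AEMeasurable (fun y => ENNReal.ofReal (f y)) (volume.restrict (Ioi c)) :=
    ((hf.mono Ioi_subset_Ici_self).aemeasurable measurableSet_Ioi).ennreal_ofReal
  refine ((aecover_Iic tendsto_id).lintegral_tendsto_of_countably_generated hmeas).congr' ?_
  filter_upwards [eventually_ge_atTop c] with x hx
  rw [id, Measure.restrict_restrict measurableSet_Iic, Iic_inter_Ioi,
    intervalIntegral.integral_of_le hx, ofReal_integral_eq_lintegral_ofReal]
  · exact (hf.mono Icc_subset_Ici_self).integrableOn_Icc.mono_set Ioc_subset_Icc_self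
  · exact ae_restrict_of_forall_mem measurableSet_Ioc fun y hy => hf0 y hy.1.le

theorem ContinuousOn.tendsto_intervalIntegral_atTop_of_lintegral_eq_top
    (hf : ContinuousOn f (Ici c)) (hf0 : ∀ x ∈ Ici c, 0 ≤ f x)
    (htop : ∫⁻ y in Ioi c, ENNReal.ofReal (f y) = ⊤) :
    Tendsto (fun x => ∫ y in c..x, f y) atTop atTop :=
  ENNReal.tendsto_ofReal_nhds_top.1 (htop ▸ hf.tendsto_ofReal_intervalIntegral_Ici hf0)

theorem ContinuousOn.lintegral_Ioi_le_of_intervalIntegral_le (hf : ContinuousOn f (Ici c))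
    (hf0 : ∀ x ∈ Ici c, 0 ≤ f x) {M : ℝ} (hM : ∀ x ≥ c, ∫ y in c..x, f y ≤ M) :
    ∫⁻ y in Ioi c, ENNReal.ofReal (f y) ≤ ENNReal.ofReal M :=
  le_of_tendsto (hf.tendsto_ofReal_intervalIntegral_Ici hf0)
    (by filter_upwards [eventually_ge_atTop c] with x hx using ENNReal.ofReal_le_ofReal (hM x hx))

end Primitive

theorem monotoneOn_sub_of_hasDerivAt_le {D : Set ℝ} (hD : Convex ℝ D) {f g f' g' : ℝ → ℝ}
    (hf : ContinuousOn f D) (hg : ContinuousOn g D)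
    (hf' : ∀ x ∈ interior D, HasDerivAt f (f' x) x)
    (hg' : ∀ x ∈ interior D, HasDerivAt g (g' x) x)
    (hle : ∀ x ∈ interior D, f' x ≤ g' x) : MonotoneOn (fun x => g x - f x) D :=
  monotoneOn_of_hasDerivWithinAt_nonneg hD (hg.sub hf)
    (fun x hx => ((hg' x hx).sub (hf' x hx)).hasDerivWithinAt)
    (fun x hx => sub_nonneg.2 (hle x hx))

noncomputable def scaleDensity (a b : ℝ → ℝ) (x : ℝ) : ℝ := (a x)⁻¹ * Real.exp (-2 * Bfun a b x)

/-- The scale function: `s(0) = 0` and `a s' e^{2B} = 1`, so `(1/2)(a s')' + b s' = 0`. -/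
noncomputable def scale (a b : ℝ → ℝ) (x : ℝ) : ℝ := ∫ y in (0:ℝ)..x, scaleDensity a b y

/-- The derivative `u' / s'` of `u` with respect to the scale function. -/
noncomputable def scaleDeriv (a b u : ℝ → ℝ) (x : ℝ) : ℝ :=
  a x * deriv u x * Real.exp (2 * Bfun a b x)

section Coefficients

variable {a b : ℝ → ℝ}

theorem continuousOn_Bfun (ha : ContinuousOn a (Ici 0)) (hapos : ∀ x ∈ Ici (0:ℝ), 0 < a x)
    (hb : ContinuousOn b (Ici 0)) : ContinuousOn (Bfun a b) (Ici 0) :=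
  (hb.div ha fun x hx => (hapos x hx).ne').continuousOn_primitive_Ici

theorem hasDerivAt_Bfun (ha : ContinuousOn a (Ici 0)) (hapos : ∀ x ∈ Ici (0:ℝ), 0 < a x)
    (hb : ContinuousOn b (Ici 0)) {x : ℝ} (hx : 0 < x) : HasDerivAt (Bfun a b) (b x / a x) x :=
  (hb.div ha fun x hx => (hapos x hx).ne').hasDerivAt_primitive_Ici hx

theorem continuousOn_exp_two_mul_Bfun (ha : ContinuousOn a (Ici 0))
    (hapos : ∀ x ∈ Ici (0:ℝ), 0 < a x) (hb : ContinuousOn b (Ici 0)) :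
    ContinuousOn (fun x => Real.exp (2 * Bfun a b x)) (Ici 0) :=
  (continuousOn_const.mul (continuousOn_Bfun ha hapos hb)).rexp

theorem continuousOn_scaleDensity (ha : ContinuousOn a (Ici 0))
    (hapos : ∀ x ∈ Ici (0:ℝ), 0 < a x) (hb : ContinuousOn b (Ici 0)) :
    ContinuousOn (scaleDensity a b) (Ici 0) :=
  (ha.inv₀ fun x hx => (hapos x hx).ne').mul
    (continuousOn_const.mul (continuousOn_Bfun ha hapos hb)).rexp

theorem scaleDensity_pos (hapos : ∀ x ∈ Ici (0:ℝ), 0 < a x) {x : ℝ} (hx : 0 ≤ x) :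
    0 < scaleDensity a b x :=
  mul_pos (inv_pos.2 (hapos x hx)) (Real.exp_pos _)

theorem continuousOn_scale (ha : ContinuousOn a (Ici 0)) (hapos : ∀ x ∈ Ici (0:ℝ), 0 < a x)
    (hb : ContinuousOn b (Ici 0)) : ContinuousOn (scale a b) (Ici 0) :=
  (continuousOn_scaleDensity ha hapos hb).continuousOn_primitive_Ici

theorem hasDerivAt_scale (ha : ContinuousOn a (Ici 0)) (hapos : ∀ x ∈ Ici (0:ℝ), 0 < a x)
    (hb : ContinuousOn b (Ici 0)) {x : ℝ} (hx : 0 < x) :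
    HasDerivAt (scale a b) (scaleDensity a b x) x :=
  (continuousOn_scaleDensity ha hapos hb).hasDerivAt_primitive_Ici hx

theorem deriv_eq_scaleDeriv_mul_scaleDensity {u : ℝ → ℝ} {x : ℝ} (hx : a x ≠ 0) :
    deriv u x = scaleDeriv a b u x * scaleDensity a b x := by
  have hexp : Real.exp (2 * Bfun a b x) * Real.exp (-2 * Bfun a b x) = 1 := by
    rw [← Real.exp_add]; ring_nf; exact Real.exp_zero
  calc deriv u x = deriv u x * (a x * (a x)⁻¹) *
        (Real.exp (2 * Bfun a b x) * Real.exp (-2 * Bfun a b x)) := by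
          rw [mul_inv_cancel₀ hx, hexp, mul_one, mul_one]
    _ = scaleDeriv a b u x * scaleDensity a b x := by
          simp only [scaleDeriv, scaleDensity]; ring

end Coefficients

namespace IsPosSolution

variable {a b u : ℝ → ℝ} {lam : ℝ}

theorem hasDerivAt (hapos : ∀ x ∈ Ici (0:ℝ), 0 < a x) (hu : IsPosSolution a b lam u) {x : ℝ}
    (hx : 0 < x) : HasDerivAt u (scaleDeriv a b u x * scaleDensity a b x) x := by
  rw [← deriv_eq_scaleDeriv_mul_scaleDensity (hapos x hx.le).ne']
  exact (hu.2.2.2.1 x hx).hasDerivAt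

theorem hasDerivAt_scaleDeriv (ha : ContinuousOn a (Ici 0))
    (hapos : ∀ x ∈ Ici (0:ℝ), 0 < a x) (hb : ContinuousOn b (Ici 0))
    (hu : IsPosSolution a b lam u) {x : ℝ} (hx : 0 < x) :
    HasDerivAt (scaleDeriv a b u) (-2 * lam * u x * Real.exp (2 * Bfun a b x)) x := by
  have hflux := (hu.2.2.2.2.1 x hx).hasDerivAt
  have hexp : HasDerivAt (fun y => Real.exp (2 * Bfun a b y))
      (Real.exp (2 * Bfun a b x) * (2 * (b x / a x))) x :=
    ((hasDerivAt_Bfun ha hapos hb hx).const_mul 2).exp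
  have heq := hu.2.2.2.2.2 x hx
  have hax : a x ≠ 0 := (hapos x hx.le).ne'
  refine (hflux.mul hexp).congr_deriv ?_
  field_simp
  linear_combination 2 * heq

theorem antitoneOn_scaleDeriv (ha : ContinuousOn a (Ici 0))
    (hapos : ∀ x ∈ Ici (0:ℝ), 0 < a x) (hb : ContinuousOn b (Ici 0))
    (hu : IsPosSolution a b lam u) (hlam : 0 < lam) :
    AntitoneOn (scaleDeriv a b u) (Ioi 0) := by
  have hv x (hx : x ∈ Ioi (0:ℝ)) := hu.hasDerivAt_scaleDeriv ha hapos hb hx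
  refine antitoneOn_of_hasDerivWithinAt_nonpos (convex_Ioi 0)
    (fun x hx => (hv x hx).continuousAt.continuousWithinAt)
    (fun x hx => (hv x (interior_subset hx)).hasDerivWithinAt) fun x hx => ?_
  have hux := hu.1 x (interior_subset hx)
  have : 0 < lam * u x * Real.exp (2 * Bfun a b x) := by positivity
  linarith

theorem scaleDeriv_nonneg (ha : ContinuousOn a (Ici 0))
    (hapos : ∀ x ∈ Ici (0:ℝ), 0 < a x) (hb : ContinuousOn b (Ici 0))
    (hscale : Tendsto (scale a b) atTop atTop)
    (hu : IsPosSolution a b lam u) (hlam : 0 < lam) {r : ℝ} (hr : 0 < r) :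
    0 ≤ scaleDeriv a b u r := by
  by_contra! hneg
  have hsub : Ici r ⊆ Ioi 0 := fun y hy => hr.trans_le hy
  have hcmp : MonotoneOn (fun x => scaleDeriv a b u r * scale a b x - u x) (Ici r) := by
    refine monotoneOn_sub_of_hasDerivAt_le (convex_Ici r)
      (hu.2.1.mono (hsub.trans Ioi_subset_Ici_self))
      (continuousOn_const.mul ((continuousOn_scale ha hapos hb).mono
        (hsub.trans Ioi_subset_Ici_self)))
      (fun x hx => hu.hasDerivAt hapos (hsub (interior_subset hx)))
      (fun x hx => (hasDerivAt_scale ha hapos hb (hsub (interior_subset hx))).const_mul _)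
      fun x hx => ?_
    rw [interior_Ici, mem_Ioi] at hx
    exact mul_le_mul_of_nonneg_right
      (hu.antitoneOn_scaleDeriv ha hapos hb hlam hr (hr.trans hx) hx.le)
      (scaleDensity_pos hapos (hr.trans hx).le).le
  obtain ⟨x, hx, hrx⟩ := ((hscale.eventually_gt_atTop
    (scale a b r + u r / -scaleDeriv a b u r)).and (eventually_ge_atTop r)).exists
  have hbound := hcmp self_mem_Ici hrx hrx
  have hux := hu.1 x (hsub hrx)
  have : u r < -scaleDeriv a b u r * (scale a b x - scale a b r) := by
    rw [← div_lt_iff₀' (neg_pos.2 hneg)]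
    linarith
  simp only at hbound
  linarith

theorem monotoneOn (ha : ContinuousOn a (Ici 0))
    (hapos : ∀ x ∈ Ici (0:ℝ), 0 < a x) (hb : ContinuousOn b (Ici 0))
    (hscale : Tendsto (scale a b) atTop atTop)
    (hu : IsPosSolution a b lam u) (hlam : 0 < lam) : MonotoneOn u (Ici 0) := by
  refine monotoneOn_of_hasDerivWithinAt_nonneg (convex_Ici 0) hu.2.1
    (fun x hx => (hu.hasDerivAt hapos (interior_Ici.subset hx)).hasDerivWithinAt)
    fun x hx => ?_
  rw [interior_Ici] at hx
  exact mul_nonneg (hu.scaleDeriv_nonneg ha hapos hb hscale hlam hx)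
    (scaleDensity_pos hapos hx.le).le

theorem scaleDeriv_mul_scale_le (ha : ContinuousOn a (Ici 0))
    (hapos : ∀ x ∈ Ici (0:ℝ), 0 < a x) (hb : ContinuousOn b (Ici 0))
    (hu : IsPosSolution a b lam u) (hlam : 0 < lam) {x₀ : ℝ} (hx₀ : 0 < x₀) :
    scaleDeriv a b u x₀ * scale a b x₀ ≤ u x₀ - 1 := by
  have hsub : Icc 0 x₀ ⊆ Ici 0 := Icc_subset_Ici_self
  have hcmp : MonotoneOn (fun x => u x - scaleDeriv a b u x₀ * scale a b x) (Icc 0 x₀) := by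
    refine monotoneOn_sub_of_hasDerivAt_le (convex_Icc 0 x₀)
      (continuousOn_const.mul ((continuousOn_scale ha hapos hb).mono hsub)) (hu.2.1.mono hsub)
      (fun x hx => ((hasDerivAt_scale ha hapos hb (interior_Icc.subset hx).1).const_mul _))
      (fun x hx => hu.hasDerivAt hapos (interior_Icc.subset hx).1) fun x hx => ?_
    rw [interior_Icc] at hx
    exact mul_le_mul_of_nonneg_right
      (hu.antitoneOn_scaleDeriv ha hapos hb hlam hx.1 hx₀ hx.2.le)
      (scaleDensity_pos hapos hx.1.le).le
  have h := hcmp (left_mem_Icc.2 hx₀.le) (right_mem_Icc.2 hx₀.le) hx₀.le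
  simp only [scale, intervalIntegral.integral_same, mul_zero, sub_zero, hu.2.2.1] at h
  simp only [scale]
  linarith

theorem lintegral_exp_two_mul_Bfun_le (ha : ContinuousOn a (Ici 0))
    (hapos : ∀ x ∈ Ici (0:ℝ), 0 < a x) (hb : ContinuousOn b (Ici 0))
    (hscale : Tendsto (scale a b) atTop atTop)
    (hu : IsPosSolution a b lam u) (hlam : 0 < lam) {x₀ : ℝ} (hx₀ : 0 < x₀) :
    ∫⁻ y in Ioi x₀, ENNReal.ofReal (Real.exp (2 * Bfun a b y)) ≤
      ENNReal.ofReal (scaleDeriv a b u x₀ / (2 * lam * u x₀)) := by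
  have hsub : Ici x₀ ⊆ Ioi 0 := fun y hy => hx₀.trans_le hy
  have hexp := (continuousOn_exp_two_mul_Bfun ha hapos hb).mono (hsub.trans Ioi_subset_Ici_self)
  refine hexp.lintegral_Ioi_le_of_intervalIntegral_le (fun x _ => (Real.exp_pos _).le)
    fun x hx => ?_
  have hcmp : MonotoneOn (fun x => -(2 * lam * u x₀) *
      (∫ y in x₀..x, Real.exp (2 * Bfun a b y)) - scaleDeriv a b u x) (Ici x₀) := by
    refine monotoneOn_sub_of_hasDerivAt_le (convex_Ici x₀)
      (fun y hy =>
        (hu.hasDerivAt_scaleDeriv ha hapos hb (hsub hy)).continuousAt.continuousWithinAt)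
      (continuousOn_const.mul hexp.continuousOn_primitive_Ici)
      (fun y hy => hu.hasDerivAt_scaleDeriv ha hapos hb (hsub (interior_subset hy)))
      (fun y hy => (hexp.hasDerivAt_primitive_Ici (interior_Ici.subset hy)).const_mul _)
      fun y hy => ?_
    rw [interior_Ici] at hy
    have huy := hu.monotoneOn ha hapos hb hscale hlam hx₀.le (hx₀.trans hy).le hy.le
    have := mul_le_mul_of_nonneg_left huy
      (by positivity : 0 ≤ 2 * lam * Real.exp (2 * Bfun a b y))
    linarith
  have h := hcmp self_mem_Ici hx hx
  have hvx := hu.scaleDeriv_nonneg ha hapos hb hscale hlam (hsub hx)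
  have hux₀ := hu.1 x₀ hx₀
  simp only [intervalIntegral.integral_same, mul_zero, zero_sub] at h
  rw [le_div_iff₀ (by positivity)]
  linarith

end IsPosSolution

theorem exists_inv_lt_of_one_div_two_mul_OmegaPlus_lt {a b : ℝ → ℝ} {c : ℝ≥0∞}
    (h : 1 / (2 * OmegaPlus a b) < c) :
    ∃ x > 0, c⁻¹ < 2 * (ENNReal.ofReal (scale a b x) *
      ∫⁻ y in Ioi x, ENNReal.ofReal (Real.exp (2 * Bfun a b y))) := by
  rw [one_div, ENNReal.inv_lt_iff_inv_lt, OmegaPlus, ENNReal.mul_iSup] at h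
  obtain ⟨x, h⟩ := lt_iSup_iff.1 h
  rw [ENNReal.mul_iSup] at h
  obtain ⟨hx, h⟩ := lt_iSup_iff.1 h
  exact ⟨x, hx, h⟩

theorem stmt12 (a b : ℝ → ℝ)
    (ha : ContDiffOn ℝ 1 a (Ici 0)) (hapos : ∀ x ∈ Ici (0:ℝ), 0 < a x)
    (hb : ContinuousOn b (Ici 0))
    (hinf : ∫⁻ x in Ioi (0:ℝ),
        ENNReal.ofReal ((a x)⁻¹ * Real.exp (-2 * Bfun a b x)) = ⊤)
    (lam : ℝ) (hlam : 1 / (2 * OmegaPlus a b) < ENNReal.ofReal lam) :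
    ¬∃ u : ℝ → ℝ, IsPosSolution a b lam u := by
  rintro ⟨u, hu⟩
  replace ha := ha.continuousOn
  have hlam0 : 0 < lam := ENNReal.ofReal_pos.1 (hlam.trans_le' bot_le)
  have hscale : Tendsto (scale a b) atTop atTop :=
    (continuousOn_scaleDensity ha hapos hb).tendsto_intervalIntegral_atTop_of_lintegral_eq_top
      (fun x hx => (scaleDensity_pos hapos hx).le) hinf
  obtain ⟨x₀, hx₀, hkey⟩ := exists_inv_lt_of_one_div_two_mul_OmegaPlus_lt hlam
  have hspeed := hu.lintegral_exp_two_mul_Bfun_le ha hapos hb hscale hlam0 hx₀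
  have hvs := hu.scaleDeriv_mul_scale_le ha hapos hb hlam0 hx₀
  have hux₀ := hu.1 x₀ hx₀
  set s := scale a b x₀
  set v := scaleDeriv a b u x₀
  have hs : 0 ≤ s := intervalIntegral.integral_nonneg hx₀.le
    fun y hy => (scaleDensity_pos hapos hy.1).le
  have hreal : lam⁻¹ < 2 * (s * (v / (2 * lam * u x₀))) := by
    rw [← ENNReal.ofReal_lt_ofReal_iff_of_nonneg (inv_nonneg.2 hlam0.le),
      ENNReal.ofReal_inv_of_pos hlam0, ENNReal.ofReal_mul zero_le_two, ENNReal.ofReal_mul hs,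
      ENNReal.ofReal_ofNat]
    exact hkey.trans_le (by gcongr)
  rw [show 2 * (s * (v / (2 * lam * u x₀))) = v * s / (lam * u x₀) by field_simp,
    lt_div_iff₀ (by positivity), inv_mul_cancel_left₀ hlam0.ne'] at hreal
  linarith
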